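/- arXiv:2106.14969 — 6 statements merged into one kernel-verified Lean document; each statement's English description precedes it below -/
import Mathlib

section
/- Let μ be a measure, L = ⌈1 + log₂ log₂ μ(H)⌉ where μ(H) ≥ 2, and let B_0 ⊆ B_1 ⊆ ... ⊆ B_L be nested sets with μ(B_0) ≥ 1 and μ(B_L) ≤ (1/2)·μ(H). Then there exists an index a ∈ {0, 1, ..., L-1} such that μ(B_a) ≥ μ(B_{a+1})² / μ(H). -/
/-- With L = ⌈1 + log₂ log₂ μ(H)⌉, μ(H) ≥ 2, and nested sets
B_0 ⊆ ... ⊆ B_L with μ(B_0) ≥ 1, μ(B_L) ≤ μ(H)/2, there exists a < L with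
μ(B_a) ≥ μ(B_{a+1})² / μ(H). -/
theorem stmt1 {α : Type*} (μ : Set α → ℝ) (H : Set α)
    (hmono : ∀ s t : Set α, s ⊆ t → μ s ≤ μ t)
    (hH : 2 ≤ μ H)
    (L : ℕ) (hL : L = ⌈1 + Real.logb 2 (Real.logb 2 (μ H))⌉₊)
    (B : ℕ → Set α)
    (hnested : ∀ i, i < L → B i ⊆ B (i + 1))
    (hB0 : 1 ≤ μ (B 0))
    (hBL : μ (B L) ≤ μ H / 2) :
    ∃ a : ℕ, a < L ∧ μ (B (a + 1)) ^ 2 / μ H ≤ μ (B a) := by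
  by_contra hcon
  push_neg at hcon
  have hHpos : (0:ℝ) < μ H := by linarith
  set M := Real.logb 2 (μ H) with hM
  have hM1 : 1 ≤ M := by
    have := Real.logb_le_logb_of_le (b := 2) (by norm_num) (by norm_num) hH
    simpa [Real.logb_self_eq_one] using this
  -- μ(B a) ≥ 1 for a ≤ L
  have hpos : ∀ a, a ≤ L → 1 ≤ μ (B a) := by
    intro a ha
    induction a with
    | zero => exact hB0
    | succ n ih =>
      have hn : n < L := Nat.lt_of_succ_le ha
      exact le_trans (ih hn.le) (hmono _ _ (hnested n hn))
  -- key induction: M - logb 2 μ(B a) ≤ M / 2^a for a ≤ L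
  have key : ∀ a, a ≤ L → M - Real.logb 2 (μ (B a)) ≤ M / 2 ^ a := by
    intro a ha
    induction a with
    | zero =>
      have : 0 ≤ Real.logb 2 (μ (B 0)) := Real.logb_nonneg (by norm_num) hB0
      simpa using by linarith
    | succ n ih =>
      have hn : n < L := Nat.lt_of_succ_le ha
      have ih' := ih hn.le
      have h1 : μ (B n) < μ (B (n+1)) ^ 2 / μ H := hcon n hn
      have hBn : 1 ≤ μ (B n) := hpos n hn.le
      have hBn1 : 1 ≤ μ (B (n+1)) := hpos (n+1) ha
      have h2 : μ (B n) * μ H < μ (B (n+1)) ^ 2 := by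
        rw [lt_div_iff₀ hHpos] at h1; linarith
      have h3 : Real.logb 2 (μ (B n) * μ H) < Real.logb 2 (μ (B (n+1)) ^ 2) :=
        Real.logb_lt_logb (by norm_num) (by positivity) h2
      rw [Real.logb_mul (by linarith) (by linarith), Real.logb_pow] at h3
      have h2n : (0:ℝ) < 2 ^ n := by positivity
      have hstep : M - Real.logb 2 (μ (B (n+1))) ≤ (M - Real.logb 2 (μ (B n))) / 2 := by
        push_cast at h3
        linarith
      calc M - Real.logb 2 (μ (B (n+1))) ≤ (M - Real.logb 2 (μ (B n))) / 2 := hstep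
        _ ≤ (M / 2 ^ n) / 2 := by linarith
        _ = M / 2 ^ (n+1) := by ring
  have hfin := key L le_rfl
  -- x_L ≤ M - 1
  have hBLpos : (0:ℝ) < μ (B L) := lt_of_lt_of_le one_pos (hpos L le_rfl)
  have hxL : Real.logb 2 (μ (B L)) ≤ M - 1 := by
    have := Real.logb_le_logb_of_le (b := 2) (by norm_num) hBLpos hBL
    rw [Real.logb_div (by linarith) (by norm_num)] at this
    simpa [Real.logb_self_eq_one, hM] using this
  -- 2^L ≥ 2M
  have hLge : (1 + Real.logb 2 M : ℝ) ≤ (L : ℝ) := by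
    rw [hL]
    exact Nat.le_ceil _
  have hMpos : (0:ℝ) < M := by linarith
  have h2L : 2 * M ≤ (2:ℝ) ^ L := by
    have : (2:ℝ) ^ (1 + Real.logb 2 M) ≤ (2:ℝ) ^ (L : ℝ) :=
      Real.rpow_le_rpow_of_exponent_le (by norm_num) hLge
    rw [Real.rpow_natCast] at this
    rw [Real.rpow_add (by norm_num), Real.rpow_one,
      Real.rpow_logb (by norm_num) (by norm_num) hMpos] at this
    linarith
  have h2Lpos : (0:ℝ) < 2 ^ L := by positivity
  have hdiv : M / 2 ^ L ≤ 1 / 2 := by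
    rw [div_le_div_iff₀ h2Lpos (by norm_num)]
    linarith
  have : (1:ℝ) ≤ M - Real.logb 2 (μ (B L)) := by linarith
  linarith
end

section
/- If k = 4·ln(n)/ε with ε ∈ (0,1), n ≥ 2, and k ≤ n, then α_k · n^{-1/k} > 1 - ε, where α_k = (k+1)^{-1/k}(1 - 1/(k+1)). -/
/-!
Write `n^{-1/k} = exp(-ε/4)` and bound `α_k` below by `exp(-log(4k)/k)`: the factor
`1 - 1/(k+1) = (1 + 1/k)⁻¹` is at least `exp(-1/k)`, and `log(k+1) + 1 ≤ log(4k)` as soon as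
`4k/(k+1) ≥ e`. Since `k ≤ n` and `4 ≤ n²`, `log(4k) ≤ 3 log n = 3kε/4`, so the product is at least
`exp(-ε) > 1 - ε`.
-/

open Real

noncomputable def alpha (k : ℝ) : ℝ := (k + 1) ^ (-(1 : ℝ) / k) * (1 - 1 / (k + 1))

lemma rpow_neg_one_div_eq_exp {x : ℝ} (hx : 0 < x) (k : ℝ) :
    x ^ (-(1 : ℝ) / k) = exp (-(log x / k)) := by
  rw [rpow_def_of_pos hx]
  ring_nf

lemma exp_neg_one_div_le_one_sub_one_div_add_one {k : ℝ} (hk : 0 < k) :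
    exp (-(1 / k)) ≤ 1 - 1 / (k + 1) := by
  have hinv : 1 - 1 / (k + 1) = (1 / k + 1)⁻¹ := by field_simp; ring
  rw [exp_neg, hinv]
  exact inv_anti₀ (by positivity) (add_one_le_exp _)

lemma log_add_one_add_one_le_log_four_mul {k : ℝ} (hk : 5 / 2 ≤ k) :
    log (k + 1) + 1 ≤ log (4 * k) := by
  have he : exp 1 ≤ 4 * k / (k + 1) := by
    rw [le_div_iff₀ (by linarith)]
    nlinarith [exp_one_lt_d9]
  have h := (le_log_iff_exp_le (by positivity)).mpr he
  rw [log_div (by positivity) (by positivity)] at h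
  linarith

lemma exp_neg_log_four_mul_div_le_alpha {k : ℝ} (hk : 5 / 2 ≤ k) :
    exp (-(log (4 * k) / k)) ≤ alpha k := by
  have hk0 : 0 < k := by linarith
  calc exp (-(log (4 * k) / k))
      ≤ exp (-(log (k + 1) / k) + -(1 / k)) := by
        rw [← neg_add, ← add_div, exp_le_exp, neg_le_neg_iff]
        gcongr
        exact log_add_one_add_one_le_log_four_mul hk
    _ = exp (-(log (k + 1) / k)) * exp (-(1 / k)) := exp_add _ _
    _ ≤ alpha k := by
        rw [alpha, rpow_neg_one_div_eq_exp (by linarith)]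
        gcongr
        exact exp_neg_one_div_le_one_sub_one_div_add_one hk0

lemma log_four_mul_le_three_mul_log {x : ℝ} (hx : 2 ≤ x) : log (4 * x) ≤ 3 * log x := by
  have hsq : 4 ≤ x ^ 2 := by nlinarith
  have h := log_le_log (by positivity) (by nlinarith : 4 * x ≤ x ^ 3)
  rwa [log_pow, Nat.cast_ofNat] at h

/-- If k = 4·ln(n)/ε with ε ∈ (0,1), n ≥ 2 and k ≤ n, then
α_k · n^{-1/k} > 1 - ε, where α_k = (k+1)^{-1/k}(1 - 1/(k+1)). -/
theorem stmt5 (n : ℕ) (hn : 2 ≤ n) (ε : ℝ) (hε0 : 0 < ε) (hε1 : ε < 1)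
    (k : ℝ) (hk : k = 4 * Real.log n / ε) (hkn : k ≤ n) :
    1 - ε < (k + 1) ^ (-(1 : ℝ) / k) * (1 - 1 / (k + 1)) * (n : ℝ) ^ (-(1 : ℝ) / k) := by
  have hn2 : (2 : ℝ) ≤ n := by exact_mod_cast hn
  have hlog2 : log 2 ≤ log n := log_le_log (by norm_num) hn2
  have hk_gt : 4 * log n < k := by
    rw [hk, lt_div_iff₀ hε0]
    nlinarith [log_two_gt_d9]
  have hk0 : 0 < k := by linarith [log_two_gt_d9]
  have hlogk : log n / k = ε / 4 := by
    rw [hk]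
    field_simp [(lt_of_lt_of_le (by positivity) hlog2).ne']
  have hlog4k : log (4 * k) / k ≤ 3 * ε / 4 := by
    have h := (log_le_log (by positivity) (by linarith : 4 * k ≤ 4 * n)).trans
      (log_four_mul_le_three_mul_log hn2)
    calc log (4 * k) / k ≤ 3 * log n / k := by gcongr
      _ = 3 * ε / 4 := by rw [mul_div_assoc, hlogk]; ring
  calc 1 - ε < exp (-ε) := by linarith [add_one_lt_exp (neg_ne_zero.mpr hε0.ne')]
    _ ≤ exp (-(log (4 * k) / k)) * exp (-(log n / k)) := by
        rw [← exp_add, hlogk]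
        gcongr
        linarith
    _ ≤ alpha k * (n : ℝ) ^ (-(1 : ℝ) / k) := by
        rw [rpow_neg_one_div_eq_exp (by positivity)]
        gcongr
        exact exp_neg_log_four_mul_div_le_alpha (by linarith [log_two_gt_d9])
end

section
/- Let μ be a probability measure on a finite set V of size n, k ≥ 1 an integer, s = n^{1/k}/δ with δ = (k+1)^{-(k+1)/k}, and define the probability measure μ̃(v) = 1/(sn) + ((s-1)/s)·μ(v). Suppose M ⊆ V satisfies sn·μ̃(M) ≥ (sn)^{1 - 1/(k+1)}. Then μ(M) ≥ (k+1)^{-1/k}·(1 - 1/(k+1))·n^{-1/k}. -/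
/-!
With `s = n^{1/k} (k+1)^{(k+1)/k}` one has `s n = ((k+1) n)^{(k+1)/k}`, so the hypothesis reads
`(k+1) n ≤ |M| + (s-1) n μ(M)`. Since `|M| ≤ n` and `μ(M) ≥ 0`, this gives `k ≤ s μ(M)`, and
`k / s` is exactly the claimed lower bound.
-/

open Finset

section Exponents

variable {k : ℝ} (hk : 0 < k)
include hk

lemma rpow_div_rpow_neg_mul_self {n : ℝ} (hn : 0 < n) :
    n ^ (1 / k) / (k + 1) ^ (-((k + 1) / k)) * n = ((k + 1) * n) ^ ((k + 1) / k) := by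
  have hexp : (k + 1) / k = 1 / k + 1 := by field_simp; ring
  rw [Real.rpow_neg (by positivity), div_inv_eq_mul, Real.mul_rpow (by positivity) hn.le,
    hexp, Real.rpow_add hn, Real.rpow_one]
  ring

lemma rpow_add_one_div_rpow_one_sub {x : ℝ} (hx : 0 ≤ x) :
    (x ^ ((k + 1) / k)) ^ (1 - 1 / (k + 1)) = x := by
  have hexp : (k + 1) / k * (1 - 1 / (k + 1)) = 1 := by field_simp; ring
  rw [← Real.rpow_mul hx, hexp, Real.rpow_one]

lemma div_rpow_div_rpow_neg {n : ℝ} (hn : 0 < n) :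
    k / (n ^ (1 / k) / (k + 1) ^ (-((k + 1) / k)))
      = (k + 1) ^ (-1 / k) * (1 - 1 / (k + 1)) * n ^ (-1 / k) := by
  have hk1 : 0 < k + 1 := by positivity
  have hexp : -((k + 1) / k) = -1 / k + -1 := by field_simp; ring
  rw [hexp, Real.rpow_add hk1, Real.rpow_neg_one, neg_div, Real.rpow_neg hk1.le,
    Real.rpow_neg hn.le]
  have : 0 < n ^ (1 / k) := by positivity
  field_simp
  ring

end Exponents

lemma mul_sum_inv_add_mul {ι : Type*} (M : Finset ι) (μ : ι → ℝ) {N : ℝ} (hN : N ≠ 0) (c : ℝ) :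
    N * ∑ v ∈ M, (1 / N + c * μ v) = #M + c * N * ∑ v ∈ M, μ v := by
  rw [sum_add_distrib, sum_const, nsmul_eq_mul, ← mul_sum]
  field_simp

lemma div_le_of_add_one_mul_le {k n s m x : ℝ} (hn : 0 < n) (hs : 0 < s) (hm : m ≤ n)
    (hx : 0 ≤ x) (h : (k + 1) * n ≤ m + (s - 1) / s * (s * n) * x) : k / s ≤ x := by
  have hscale : (s - 1) / s * (s * n) = (s - 1) * n := by field_simp
  rw [hscale] at h
  rw [div_le_iff₀ hs, ← mul_le_mul_iff_left₀ hn]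
  nlinarith [mul_nonneg hn.le hx]

theorem stmt6_general {α : Type*} [Fintype α] (n k : ℕ) (hk : 1 ≤ k) (hn : 1 ≤ n)
    (hcard : Fintype.card α = n)
    (μ : α → ℝ) (hnn : ∀ v, 0 ≤ μ v)
    (δ s : ℝ)
    (hδ : δ = ((k : ℝ) + 1) ^ (-(((k : ℝ) + 1) / k)))
    (hs : s = (n : ℝ) ^ ((1 : ℝ) / k) / δ)
    (M : Finset α)
    (hM : (s * n) ^ (1 - 1 / ((k : ℝ) + 1))
        ≤ s * n * ∑ v ∈ M, (1 / (s * n) + (s - 1) / s * μ v)) :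
    ((k : ℝ) + 1) ^ (-(1 : ℝ) / k) * (1 - 1 / ((k : ℝ) + 1)) * (n : ℝ) ^ (-(1 : ℝ) / k)
      ≤ ∑ v ∈ M, μ v := by
  have hk0 : (0 : ℝ) < k := by exact_mod_cast hk
  have hn0 : (0 : ℝ) < n := by exact_mod_cast hn
  have hs0 : 0 < s := by rw [hs, hδ]; positivity
  have hsn : s * n = (((k : ℝ) + 1) * n) ^ (((k : ℝ) + 1) / k) := by
    rw [hs, hδ, rpow_div_rpow_neg_mul_self hk0 hn0]
  have hcardM : (#M : ℝ) ≤ n := by exact_mod_cast hcard ▸ card_le_univ M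
  rw [mul_sum_inv_add_mul M μ (by positivity), hsn,
    rpow_add_one_div_rpow_one_sub hk0 (by positivity), ← hsn] at hM
  rw [← div_rpow_div_rpow_neg hk0 hn0, ← hδ, ← hs]
  exact div_le_of_add_one_mul_le hn0 hs0 hcardM (sum_nonneg fun v _ => hnn v) hM

/-- μ a probability measure on a finite set of size n, k ≥ 1,
s = n^{1/k}/δ with δ = (k+1)^{-(k+1)/k}, μ̃(v) = 1/(sn) + ((s-1)/s)μ(v). If
sn·μ̃(M) ≥ (sn)^{1-1/(k+1)} then μ(M) ≥ (k+1)^{-1/k}(1 - 1/(k+1))·n^{-1/k}. -/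
theorem stmt6 {α : Type*} [Fintype α] (n k : ℕ) (hk : 1 ≤ k) (hn : 1 ≤ n)
    (hcard : Fintype.card α = n)
    (μ : α → ℝ) (hnn : ∀ v, 0 ≤ μ v) (hsum : ∑ v, μ v = 1)
    (δ s : ℝ)
    (hδ : δ = ((k : ℝ) + 1) ^ (-(((k : ℝ) + 1) / k)))
    (hs : s = (n : ℝ) ^ ((1 : ℝ) / k) / δ)
    (M : Finset α)
    (hM : (s * n) ^ (1 - 1 / ((k : ℝ) + 1))
        ≤ s * n * ∑ v ∈ M, (1 / (s * n) + (s - 1) / s * μ v)) :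
    ((k : ℝ) + 1) ^ (-(1 : ℝ) / k) * (1 - 1 / ((k : ℝ) + 1)) * (n : ℝ) ^ (-(1 : ℝ) / k)
      ≤ ∑ v ∈ M, μ v :=
  stmt6_general n k hk hn hcard μ hnn δ s hδ hs M hM
end

section
/- Let V be a finite set of size n, and suppose we repeatedly extract subsets: M_1, M_2, ... ⊆ V, pairwise disjoint, where each M_i is extracted from the remaining set R_{i-1} = V \ (M_1 ∪ ... ∪ M_{i-1}) and satisfies |M_i| ≥ |R_{i-1}|^{1 - 1/k} whenever R_{i-1} ≠ ∅. Then the process terminates (R_i = ∅) after at most O(k·n^{1/k}) steps. -/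
open Real

lemma stmt10_step (k : ℕ) (hk : 1 ≤ k) (x y : ℝ) (hx : 1 ≤ x) (hy : 0 ≤ y)
    (h : x ^ (1 - 1 / (k : ℝ)) ≤ x - y) :
    y ^ ((1 : ℝ) / k) ≤ x ^ ((1 : ℝ) / k) - 1 / k := by
  have hkr : (1 : ℝ) ≤ (k : ℝ) := by exact_mod_cast hk
  have hkpos : (0 : ℝ) < k := by linarith
  have hxpos : (0 : ℝ) < x := by linarith
  set t : ℝ := x ^ (-(1 / (k : ℝ))) with ht
  have ht0 : 0 < t := Real.rpow_pos_of_pos hxpos _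
  have ht1 : t ≤ 1 := Real.rpow_le_one_of_one_le_of_nonpos hx (neg_nonpos.mpr (by positivity))
  have hxt : x ^ (1 - 1 / (k : ℝ)) = x * t := by
    rw [ht, sub_eq_add_neg, Real.rpow_add hxpos, Real.rpow_one]
  have hy' : y ≤ x * (1 - t) := by
    rw [hxt] at h; nlinarith
  have htk : t / k ≤ 1 := by
    rw [div_le_one hkpos]; linarith
  have hber : 1 - t ≤ (1 - t / k) ^ k := by
    have := one_add_mul_le_pow (a := -(t / k)) (by nlinarith) k
    have hkt : (k : ℝ) * (t / k) = t := by field_simp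
    calc 1 - t = 1 + (k : ℝ) * (-(t / k)) := by rw [mul_neg, hkt]; ring
    _ ≤ (1 + -(t / k)) ^ k := this
    _ = (1 - t / k) ^ k := by ring_nf
  have hroot : (1 - t) ^ ((1 : ℝ) / k) ≤ 1 - t / k := by
    have h1 : (1 - t) ^ ((1 : ℝ) / k) ≤ ((1 - t / k) ^ k) ^ ((1 : ℝ) / k) :=
      Real.rpow_le_rpow (by linarith) hber (by positivity)
    calc (1 - t) ^ ((1 : ℝ) / k) ≤ ((1 - t / k) ^ k) ^ ((1 : ℝ) / k) := h1
    _ = (1 - t / k) ^ ((k : ℝ) * (1 / k)) := by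
        rw [← Real.rpow_natCast (1 - t / k) k, ← Real.rpow_mul (by linarith)]
    _ = 1 - t / k := by
        rw [mul_one_div, div_self (ne_of_gt hkpos), Real.rpow_one]
  have hxk : (0 : ℝ) ≤ x ^ ((1 : ℝ) / k) := (Real.rpow_pos_of_pos hxpos _).le
  have hxtt : x ^ ((1 : ℝ) / k) * t = 1 := by
    rw [ht, ← Real.rpow_add hxpos]; simp
  calc y ^ ((1 : ℝ) / k) ≤ (x * (1 - t)) ^ ((1 : ℝ) / k) :=
        Real.rpow_le_rpow hy hy' (by positivity)
  _ = x ^ ((1 : ℝ) / k) * (1 - t) ^ ((1 : ℝ) / k) :=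
        Real.mul_rpow hxpos.le (by linarith)
  _ ≤ x ^ ((1 : ℝ) / k) * (1 - t / k) :=
        mul_le_mul_of_nonneg_left hroot hxk
  _ = x ^ ((1 : ℝ) / k) - (x ^ ((1 : ℝ) / k) * t) / k := by ring
  _ = x ^ ((1 : ℝ) / k) - 1 / k := by rw [hxtt]

/-- If from a set of size n one repeatedly extracts, from the remaining
set R_i, a subset of size at least |R_i|^{1-1/k} (as long as R_i ≠ ∅), the process
terminates after at most O(k·n^{1/k}) steps. -/
theorem stmt10 :
    ∃ C : ℝ, 0 < C ∧
      ∀ (α : Type) (R : ℕ → Finset α) (n k : ℕ), 1 ≤ k →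
        (R 0).card = n →
        (∀ i, R (i + 1) ⊆ R i) →
        (∀ i, (R i).Nonempty →
          ((R i).card : ℝ) ^ (1 - 1 / (k : ℝ)) ≤ ((R i).card : ℝ) - ((R (i + 1)).card : ℝ)) →
        ∃ T : ℕ, (T : ℝ) ≤ C * k * (n : ℝ) ^ ((1 : ℝ) / k) ∧ R T = ∅ := by
  refine ⟨2, by norm_num, ?_⟩
  intro α R n k hk h0 hsub hstep
  have hkr : (1 : ℝ) ≤ (k : ℝ) := by exact_mod_cast hk
  have hkpos : (0 : ℝ) < k := by linarith
  by_cases hn : n = 0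
  · refine ⟨0, ?_, Finset.card_eq_zero.mp (hn ▸ h0)⟩
    subst hn
    rw [Nat.cast_zero, Real.zero_rpow (by positivity)]
    norm_num
  · have hn1 : (1 : ℝ) ≤ n := by
      exact_mod_cast Nat.one_le_iff_ne_zero.mpr hn
    have key : ∀ i, (R i).Nonempty →
        ((R i).card : ℝ) ^ ((1 : ℝ) / k) ≤ (n : ℝ) ^ ((1 : ℝ) / k) - i / k := by
      intro i
      induction i with
      | zero => intro _; simp [h0]
      | succ i ih =>
        intro hne
        have hne' : (R i).Nonempty := hne.mono (hsub i)
        have hx : (1 : ℝ) ≤ ((R i).card : ℝ) := by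
          exact_mod_cast hne'.card_pos
        have hy : (0 : ℝ) ≤ ((R (i + 1)).card : ℝ) := by positivity
        have h1 := stmt10_step k hk _ _ hx hy (hstep i hne')
        have h2 := ih hne'
        have : ((i : ℝ) + 1) / k = i / k + 1 / k := by ring
        push_cast
        rw [this]
        linarith
    refine ⟨⌈(k : ℝ) * (n : ℝ) ^ ((1 : ℝ) / k)⌉₊, ?_, ?_⟩
    · have h1 : (1 : ℝ) ≤ (n : ℝ) ^ ((1 : ℝ) / k) :=
        Real.one_le_rpow hn1 (by positivity)
      have h2 := Nat.ceil_lt_add_one (a := (k : ℝ) * (n : ℝ) ^ ((1 : ℝ) / k)) (by positivity)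
      nlinarith
    · by_contra h
      have hne : (R ⌈(k : ℝ) * (n : ℝ) ^ ((1 : ℝ) / k)⌉₊).Nonempty :=
        Finset.nonempty_of_ne_empty h
      have hx : (1 : ℝ) ≤ ((R ⌈(k : ℝ) * (n : ℝ) ^ ((1 : ℝ) / k)⌉₊).card : ℝ) := by
        exact_mod_cast hne.card_pos
      have h1 : (1 : ℝ) ≤ ((R ⌈(k : ℝ) * (n : ℝ) ^ ((1 : ℝ) / k)⌉₊).card : ℝ) ^ ((1 : ℝ) / k) :=
        Real.one_le_rpow hx (by positivity)
      have h2 := key _ hne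
      have h3 : (k : ℝ) * (n : ℝ) ^ ((1 : ℝ) / k) ≤ (⌈(k : ℝ) * (n : ℝ) ^ ((1 : ℝ) / k)⌉₊ : ℝ) :=
        Nat.le_ceil _
      have h4 : (n : ℝ) ^ ((1 : ℝ) / k) ≤ (⌈(k : ℝ) * (n : ℝ) ^ ((1 : ℝ) / k)⌉₊ : ℝ) / k :=
        (le_div_iff₀ hkpos).mpr (by linarith [mul_comm (k : ℝ) ((n : ℝ) ^ ((1 : ℝ) / k))])
      linarith
end

section
/- Let G = (V,E,w) be a weighted graph, h a hop parameter, β ≥ 1, ε ∈ (0,1), and suppose d̃(u,v) is an estimate satisfying d_G^{(β·h)}(u,v) ≤ d̃(u,v) ≤ β·d_G^{(h)}(u,v). For a scale i with 2^i ≤ d̃(u,v) < 2^{i+1}, define the graph G_i = (V,E,w_i) with w_i(e) = w(e) + ω_i where ω_i = (ε/(β·h))·2^i. Then: (a) d_{G_i}(u,v) ≤ (1+ε)·d_G^{(h)}(u,v); (b) d_{G_i}(u,v) ≥ d_G^{(⌈2β·h/ε⌉)}(u,v); (c) every path P in G_i from u to v of weight w_i(P) ≤ c·2^i (for any c ≥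 1) has at most c·β·h/ε hops. -/
/-!
A hop-bounded distance is an infimum of walk weights over walks with a bounded number of edges,
and adding `ω` to every edge adds exactly `ω` per hop. Hence on `w + ω` an `h`-hop walk costs at
most `h·ω = ε·2^i/β ≤ ε·d^{(h)}` extra, while a walk with more than `m ≥ 2βh/ε` hops costs more
than `m·ω ≥ 2^{i+1} > d^{(βh)} ≥ d^{(m)}`, and a walk of `w + ω`-weight at most `c·2^i` has at most
`c·2^i/ω = cβh/ε` hops. Walks may be shortened to paths, so `card V` hops suffice on `w + ω`.
-/

open scoped ENNReal

/-- `hopDist w h u v` is the hop-constrained distance: the minimum weight of a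
`u`-`v` path (walk) with at most `h` edges, where `w a b = ⊤` encodes a non-edge. -/
noncomputable def hopDist {V : Type*} [DecidableEq V] (w : V → V → ℝ≥0∞) :
    ℕ → V → V → ℝ≥0∞
  | 0 => fun u v => if u = v then 0 else ⊤
  | (h + 1) => fun u v => min (hopDist w h u v) (⨅ z, w u z + hopDist w h z v)

section HopDistance

variable {V : Type*} [DecidableEq V] (w : V → V → ℝ≥0∞)

lemma hopDist_antitone {m n : ℕ} (hmn : m ≤ n) (u v : V) :
    hopDist w n u v ≤ hopDist w m u v := by
  induction n, hmn using Nat.le_induction with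
  | base => exact le_rfl
  | succ n _ ih => exact (min_le_left _ _).trans ih

/-- The weight of the walk `u → l₀ → l₁ → ⋯`; it is `⊤` unless the walk ends at `v`. -/
noncomputable def walkWeight : V → List V → V → ℝ≥0∞
  | u, [], v => if u = v then 0 else ⊤
  | u, z :: l, v => w u z + walkWeight z l v

lemma hopDist_le_walkWeight (l : List V) {n : ℕ} (hl : l.length ≤ n) (u v : V) :
    hopDist w n u v ≤ walkWeight w u l v := by
  induction l generalizing n u with
  | nil => exact hopDist_antitone w n.zero_le u v
  | cons z l ih =>
    cases n with
    | zero => simp at hl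
    | succ n =>
      exact (min_le_right _ _).trans
        ((iInf_le _ z).trans (add_le_add_right (ih (by simpa using hl) z) _))

lemma iInf_walkWeight_le_hopDist (n : ℕ) (u v : V) :
    ⨅ (l : List V) (_ : l.length ≤ n), walkWeight w u l v ≤ hopDist w n u v := by
  induction n generalizing u with
  | zero => exact iInf₂_le [] (Nat.le_refl 0)
  | succ n ih =>
    refine le_min ((iInf₂_mono' fun l hl => ⟨l, hl.trans n.le_succ, le_rfl⟩).trans (ih u))
      (le_iInf fun z => ?_)
    calc ⨅ (l : List V) (_ : l.length ≤ n + 1), walkWeight w u l v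
        ≤ ⨅ (l : List V) (_ : l.length ≤ n), w u z + walkWeight w z l v :=
          le_iInf₂ fun l hl => iInf₂_le (z :: l) (by simpa using hl)
      _ = w u z + ⨅ (l : List V) (_ : l.length ≤ n), walkWeight w z l v := by
          simp only [ENNReal.add_iInf]
      _ ≤ w u z + hopDist w n z v := by gcongr; exact ih z

lemma walkWeight_le_append_cons (p q : List V) (u x v : V) :
    walkWeight w x q v ≤ walkWeight w u (p ++ x :: q) v := by
  induction p generalizing u with
  | nil => exact le_add_self
  | cons a p ih => exact (ih a).trans le_add_self

lemma exists_nodup_walkWeight_le (l : List V) (u v : V) :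
    ∃ l' : List V, (u :: l').Nodup ∧ walkWeight w u l' v ≤ walkWeight w u l v := by
  induction l generalizing u with
  | nil => exact ⟨[], List.nodup_singleton u, le_rfl⟩
  | cons z l ih =>
    obtain ⟨l', hnd, hle⟩ := ih z
    have hstep : walkWeight w u (z :: l') v ≤ walkWeight w u (z :: l) v := by
      simp only [walkWeight]; gcongr
    by_cases hu : u ∈ z :: l'
    · obtain ⟨p, q, hpq⟩ := List.append_of_mem hu
      refine ⟨q, ?_, ?_⟩
      · rw [hpq] at hnd
        exact hnd.sublist (List.sublist_append_right p _)
      · calc walkWeight w u q v ≤ walkWeight w u (p ++ u :: q) v :=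
              walkWeight_le_append_cons w p q u u v
          _ = walkWeight w u (z :: l') v := by rw [hpq]
          _ ≤ walkWeight w u (z :: l) v := hstep
    · exact ⟨z :: l', List.nodup_cons.2 ⟨hu, hnd⟩, hstep⟩

lemma hopDist_card_le [Fintype V] (n : ℕ) (u v : V) :
    hopDist w (Fintype.card V) u v ≤ hopDist w n u v := by
  refine le_trans (le_iInf₂ fun l _ => ?_) (iInf_walkWeight_le_hopDist w n u v)
  obtain ⟨l', hnd, hle⟩ := exists_nodup_walkWeight_le w l u v
  have hlen : l'.length < Fintype.card V := by simpa using hnd.length_le_card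
  exact (hopDist_le_walkWeight w l' hlen.le u v).trans hle

lemma walkWeight_add_const (ω : ℝ≥0∞) (u : V) (l : List V) (v : V) :
    walkWeight (fun a b => w a b + ω) u l v = walkWeight w u l v + l.length * ω := by
  induction l generalizing u with
  | nil => simp [walkWeight]
  | cons z l ih =>
    simp only [walkWeight, ih, List.length_cons]
    push_cast
    ring

lemma hopDist_add_const_le (ω : ℝ≥0∞) (n : ℕ) (u v : V) :
    hopDist (fun a b => w a b + ω) n u v ≤ hopDist w n u v + n * ω := by
  refine le_trans ?_ (add_le_add_left (iInf_walkWeight_le_hopDist w n u v) _)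
  simp only [ENNReal.iInf_add]
  refine le_iInf₂ fun l hl => (hopDist_le_walkWeight _ l hl u v).trans ?_
  rw [walkWeight_add_const]
  gcongr

lemma min_hopDist_le_hopDist_add_const (ω : ℝ≥0∞) (k n : ℕ) (u v : V) :
    min (hopDist w k u v) ((k + 1) * ω) ≤ hopDist (fun a b => w a b + ω) n u v := by
  refine le_trans (le_iInf₂ fun l _ => ?_) (iInf_walkWeight_le_hopDist _ n u v)
  rw [walkWeight_add_const]
  by_cases hl : l.length ≤ k
  · exact (min_le_left _ _).trans ((hopDist_le_walkWeight w l hl u v).trans le_self_add)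
  · refine (min_le_right _ _).trans (le_add_left ?_)
    gcongr
    exact_mod_cast Nat.lt_iff_add_one_le.1 (not_le.1 hl)

end HopDistance

lemma mul_le_mul_iff_of_mul_eq_mul {ω t ε a : ℝ≥0∞} (h : ω * t = ε * a)
    (ht₀ : t ≠ 0) (ht : t ≠ ⊤) (ha₀ : a ≠ 0) (ha : a ≠ ⊤) (x y : ℝ≥0∞) :
    x * ω ≤ y * a ↔ x * ε ≤ y * t :=
  calc x * ω ≤ y * a ↔ x * ω * t ≤ y * a * t := (ENNReal.mul_le_mul_iff_left ht₀ ht).symm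
    _ ↔ x * ε * a ≤ y * t * a := by rw [mul_assoc x, h, ← mul_assoc, mul_right_comm y]
    _ ↔ x * ε ≤ y * t := ENNReal.mul_le_mul_iff_left ha₀ ha

lemma mul_le_mul_iff_of_mul_eq_mul' {ω t ε a : ℝ≥0∞} (h : ω * t = ε * a)
    (ht₀ : t ≠ 0) (ht : t ≠ ⊤) (ha₀ : a ≠ 0) (ha : a ≠ ⊤) (x y : ℝ≥0∞) :
    y * a ≤ x * ω ↔ y * t ≤ x * ε :=
  calc y * a ≤ x * ω ↔ y * a * t ≤ x * ω * t := (ENNReal.mul_le_mul_iff_left ht₀ ht).symm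
    _ ↔ y * t * a ≤ x * ε * a := by rw [mul_assoc x, h, ← mul_assoc, mul_right_comm y]
    _ ↔ y * t ≤ x * ε := ENNReal.mul_le_mul_iff_left ha₀ ha

/-- Given an estimate dEst with d_G^{(βh)}(u,v) ≤ dEst ≤ β·d_G^{(h)}(u,v)
and 2^i ≤ dEst < 2^{i+1}, set ω = (ε/(βh))·2^i and w_i = w + ω (the graph G_i). Then:
(a) d_{G_i}(u,v) ≤ (1+ε)·d_G^{(h)}(u,v);
(b) d_{G_i}(u,v) ≥ d_G^{(m)}(u,v) for every hop budget m ≥ 2βh/ε;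
(c) any u-v path in G_i with s hops and w_i-weight W ≤ c·2^i (so that s·ω ≤ W)
    has s ≤ c·β·h/ε hops. -/
theorem stmt15 {V : Type*} [Fintype V] [DecidableEq V]
    (w : V → V → ℝ≥0∞) (h β : ℕ) (hh : 1 ≤ h) (hβ : 1 ≤ β)
    (ε : ℝ≥0∞) (hε0 : 0 < ε) (hε1 : ε < 1)
    (u v : V) (dEst : ℝ≥0∞)
    (hlo : hopDist w (β * h) u v ≤ dEst)
    (hhi : dEst ≤ (β : ℝ≥0∞) * hopDist w h u v)
    (i : ℕ) (hsc1 : (2 : ℝ≥0∞) ^ i ≤ dEst) (hsc2 : dEst < 2 ^ (i + 1))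
    (ω : ℝ≥0∞) (hω : ω = ε / ((β : ℝ≥0∞) * h) * 2 ^ i)
    (wi : V → V → ℝ≥0∞) (hwi : ∀ a b, wi a b = w a b + ω) :
    hopDist wi (Fintype.card V) u v ≤ (1 + ε) * hopDist w h u v ∧
    (∀ m : ℕ, 2 * (β : ℝ≥0∞) * h / ε ≤ m →
        hopDist w m u v ≤ hopDist wi (Fintype.card V) u v) ∧
    (∀ (c W : ℝ≥0∞) (s : ℕ), (s : ℝ≥0∞) * ω ≤ W → W ≤ c * 2 ^ i →
        (s : ℝ≥0∞) ≤ c * (β : ℝ≥0∞) * h / ε) := by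
  obtain rfl : wi = fun a b => w a b + ω := funext₂ hwi
  have hε₀ : ε ≠ 0 := hε0.ne'
  have hε : ε ≠ ⊤ := (hε1.trans ENNReal.one_lt_top).ne
  have hβ₀ : (β : ℝ≥0∞) ≠ 0 := Nat.cast_ne_zero.2 (by omega)
  have hβh₀ : (β * h : ℝ≥0∞) ≠ 0 := mul_ne_zero hβ₀ (Nat.cast_ne_zero.2 (by omega))
  have hβh : (β * h : ℝ≥0∞) ≠ ⊤ :=
    ENNReal.mul_ne_top (ENNReal.natCast_ne_top β) (ENNReal.natCast_ne_top h)
  have h2i₀ : (2 : ℝ≥0∞) ^ i ≠ 0 := pow_ne_zero i two_ne_zero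
  have h2i : (2 : ℝ≥0∞) ^ i ≠ ⊤ := ENNReal.pow_ne_top ENNReal.ofNat_ne_top
  have hωβh : ω * (β * h) = ε * 2 ^ i := by
    rw [hω, mul_right_comm, ENNReal.div_mul_cancel hβh₀ hβh]
  refine ⟨?_, fun m hm => ?_, fun c W s hsW hW => ?_⟩
  · have hhω : (h : ℝ≥0∞) * ω ≤ ε * hopDist w h u v := by
      refine (ENNReal.mul_le_mul_iff_right hβ₀ (ENNReal.natCast_ne_top β)).1 ?_
      calc (β : ℝ≥0∞) * (h * ω) ≤ ε * 2 ^ i := by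
            rw [← mul_assoc, mul_le_mul_iff_of_mul_eq_mul hωβh hβh₀ hβh h2i₀ h2i, mul_comm]
        _ ≤ ε * (β * hopDist w h u v) := by gcongr; exact hsc1.trans hhi
        _ = β * (ε * hopDist w h u v) := by ring
    calc hopDist _ (Fintype.card V) u v ≤ hopDist _ h u v := hopDist_card_le _ h u v
      _ ≤ hopDist w h u v + h * ω := hopDist_add_const_le w ω h u v
      _ ≤ hopDist w h u v + ε * hopDist w h u v := by gcongr
      _ = (1 + ε) * hopDist w h u v := by ring
  · have hmε : 2 * (β * h : ℝ≥0∞) ≤ m * ε := by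
      rwa [← mul_assoc, ← ENNReal.div_le_iff_le_mul (.inl hε₀) (.inl hε)]
    have hβhm : β * h ≤ m := by
      exact_mod_cast calc (β * h : ℝ≥0∞) ≤ 2 * (β * h) := le_mul_of_one_le_left' one_le_two
        _ ≤ m * ε := hmε
        _ ≤ m := mul_le_of_le_one_right' hε1.le
    have hdist : hopDist w m u v ≤ (m + 1) * ω := calc
      hopDist w m u v ≤ hopDist w (β * h) u v := hopDist_antitone w hβhm u v
      _ ≤ 2 ^ (i + 1) := hlo.trans hsc2.le
      _ = 2 * 2 ^ i := pow_succ' 2 i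
      _ ≤ m * ω := (mul_le_mul_iff_of_mul_eq_mul' hωβh hβh₀ hβh h2i₀ h2i _ _).2 hmε
      _ ≤ (m + 1) * ω := by gcongr; exact le_self_add
    exact (le_min le_rfl hdist).trans (min_hopDist_le_hopDist_add_const w ω m _ u v)
  · rw [mul_assoc, ENNReal.le_div_iff_mul_le (.inl hε₀) (.inl hε)]
    exact (mul_le_mul_iff_of_mul_eq_mul hωβh hβh₀ hβh h2i₀ h2i _ _).1 (hsW.trans hW)
end

section
/- Let μ be a (≥1)-measure on a finite vertex set V (i.e., μ(v) ≥ 1 for all v), and suppose a recursive partition process satisfies: V is split as V = X̲₁ ⊎ Y₁ (disjoint), an embedding f₁ on a superset X̄₁ ⊇ X̲₁ satisfies E_{x∼X̄₁}[|f₁(x)|] ≤ μ(X̄₁)^{1+1/k}, an embedding f̃ on Y₁ satisfies E_{x∼Y₁}[|f̃(x)|] ≤ μ(Y₁)^{1+1/k}, and the cluster bound μ(X̄₁) ≤ μ(X̲₁)·(μ(V)/μ(X̄₁'))^{1/k} holds for some X̄₁' ⊇ X̄₁. Then the combined embedding f = f₁ ∪ f̃ satisfies E_{x∼V}[|f(x)|]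 ≤ μ(V)^{1+1/k}, where E_{x∼μ'}[|g(x)|] = Σ_{x} μ(x)·|g(x)| restricted to the relevant domain. -/
/-- Combining step for clan sizes. With V = X̲₁ ⊎ Y₁, clan-size bounds
on X̄₁ ⊇ X̲₁ and on Y₁, and the cluster bound μ(X̄₁) ≤ μ(X̲₁)(μ(V)/μ(X̄₁'))^{1/k}
(X̄₁ ⊆ X̄₁' ⊆ V), the combined embedding satisfies E_{x∼V}[|f(x)|] ≤ μ(V)^{1+1/k}. -/
theorem stmt19 {α : Type*} [DecidableEq α] (μ : α → ℝ) (k : ℕ) (hk : 1 ≤ k)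
    (V X₁ Y₁ Xb Xb' : Finset α)
    (hμ1 : ∀ x ∈ V, 1 ≤ μ x)
    (hsplit : X₁ ∪ Y₁ = V) (hdisj : Disjoint X₁ Y₁)
    (hX1ne : X₁.Nonempty)
    (hXb : X₁ ⊆ Xb) (hXb' : Xb ⊆ Xb') (hXb'V : Xb' ⊆ V)
    (F₁ Ft : α → ℕ)
    (hF₁0 : ∀ x ∉ Xb, F₁ x = 0) (hFt0 : ∀ x ∉ Y₁, Ft x = 0)
    (hE1 : ∑ x ∈ Xb, μ x * F₁ x ≤ (∑ x ∈ Xb, μ x) ^ (1 + 1 / (k : ℝ)))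
    (hE2 : ∑ x ∈ Y₁, μ x * Ft x ≤ (∑ x ∈ Y₁, μ x) ^ (1 + 1 / (k : ℝ)))
    (hcluster : ∑ x ∈ Xb, μ x
        ≤ (∑ x ∈ X₁, μ x) * ((∑ x ∈ V, μ x) / (∑ x ∈ Xb', μ x)) ^ (1 / (k : ℝ))) :
    ∑ x ∈ V, μ x * (F₁ x + Ft x) ≤ (∑ x ∈ V, μ x) ^ (1 + 1 / (k : ℝ)) := by
  have hXbV : Xb ⊆ V := hXb'.trans hXb'V
  have hYV : Y₁ ⊆ V := hsplit ▸ Finset.subset_union_right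
  have hX1V : X₁ ⊆ V := hXb.trans hXbV
  have hμ0 : ∀ x ∈ V, 0 ≤ μ x := fun x hx => le_trans zero_le_one (hμ1 x hx)
  set S := ∑ x ∈ V, μ x with hS
  set A := ∑ x ∈ Xb, μ x with hA
  set B := ∑ x ∈ X₁, μ x with hB
  set C := ∑ x ∈ Y₁, μ x with hC
  set D := ∑ x ∈ Xb', μ x with hD
  have hB1 : (1:ℝ) ≤ B := by
    obtain ⟨x, hx⟩ := hX1ne
    calc (1:ℝ) ≤ μ x := hμ1 x (hX1V hx)
    _ ≤ B := Finset.single_le_sum (fun y hy => hμ0 y (hX1V hy)) hx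
  have hBA : B ≤ A := Finset.sum_le_sum_of_subset_of_nonneg hXb
    (fun x hx _ => hμ0 x (hXbV hx))
  have hAD : A ≤ D := Finset.sum_le_sum_of_subset_of_nonneg hXb'
    (fun x hx _ => hμ0 x (hXb'V hx))
  have hDS : D ≤ S := Finset.sum_le_sum_of_subset_of_nonneg hXb'V
    (fun x hx _ => hμ0 x hx)
  have hA1 : (1:ℝ) ≤ A := hB1.trans hBA
  have hD1 : (1:ℝ) ≤ D := hA1.trans hAD
  have hS1 : (1:ℝ) ≤ S := hD1.trans hDS
  have hC0 : (0:ℝ) ≤ C := Finset.sum_nonneg (fun x hx => hμ0 x (hYV hx))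
  have hCS : C ≤ S := Finset.sum_le_sum_of_subset_of_nonneg hYV
    (fun x hx _ => hμ0 x hx)
  have hk0 : (0:ℝ) < 1 / k := by positivity
  have hsum : ∑ x ∈ V, μ x * (F₁ x + Ft x)
      = (∑ x ∈ Xb, μ x * F₁ x) + ∑ x ∈ Y₁, μ x * Ft x := by
    have : ∑ x ∈ V, μ x * (F₁ x + Ft x)
        = (∑ x ∈ V, μ x * F₁ x) + ∑ x ∈ V, μ x * Ft x := by
      rw [← Finset.sum_add_distrib]
      exact Finset.sum_congr rfl (fun x _ => by push_cast; ring)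
    rw [this,
        ← Finset.sum_subset hXbV (fun x _ hx => by simp [hF₁0 x hx]),
        ← Finset.sum_subset hYV (fun x _ hx => by simp [hFt0 x hx])]
  rw [hsum]
  have key1 : (∑ x ∈ Xb, μ x * F₁ x) ≤ B * S ^ (1 / (k:ℝ)) := by
    refine hE1.trans ?_
    have e1 : A ^ (1 + 1/(k:ℝ)) = A * A ^ (1/(k:ℝ)) := by
      rw [Real.rpow_add (by linarith), Real.rpow_one]
    rw [e1]
    calc A * A ^ (1/(k:ℝ)) ≤ (B * (S / D) ^ (1/(k:ℝ))) * A ^ (1/(k:ℝ)) :=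
          mul_le_mul_of_nonneg_right hcluster (Real.rpow_nonneg (by linarith) _)
      _ = B * ((S / D) ^ (1/(k:ℝ)) * A ^ (1/(k:ℝ))) := by ring
      _ ≤ B * S ^ (1/(k:ℝ)) := by
          apply mul_le_mul_of_nonneg_left ?_ (by linarith)
          rw [← Real.mul_rpow (by positivity) (by linarith)]
          apply Real.rpow_le_rpow (by positivity) ?_ hk0.le
          rw [div_mul_eq_mul_div, div_le_iff₀ (by linarith)]
          nlinarith
  have key2 : (∑ x ∈ Y₁, μ x * Ft x) ≤ C * S ^ (1 / (k:ℝ)) := by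
    refine hE2.trans ?_
    calc C ^ (1 + 1/(k:ℝ)) = C * C ^ (1/(k:ℝ)) := by
          rcases eq_or_lt_of_le hC0 with h | h
          · rw [← h, Real.zero_rpow (by positivity), zero_mul]
          · rw [Real.rpow_add h, Real.rpow_one]
      _ ≤ C * S ^ (1/(k:ℝ)) :=
          mul_le_mul_of_nonneg_left (Real.rpow_le_rpow hC0 hCS hk0.le) hC0
  have hBC : B + C = S := by
    rw [hS, ← hsplit, Finset.sum_union hdisj]
  calc _ ≤ B * S ^ (1/(k:ℝ)) + C * S ^ (1/(k:ℝ)) := add_le_add key1 key2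
    _ = S * S ^ (1/(k:ℝ)) := by rw [← add_mul, hBC]
    _ = S ^ (1 + 1/(k:ℝ)) := by rw [Real.rpow_add (by linarith), Real.rpow_one]
end
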